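/- arXiv:2209.00164 — 9 statements merged into one kernel-verified Lean document; each statement's English description precedes it below -/
import Mathlib

section
/- The cone of finite Borel measures on the compact space X = {1/n : n ∈ ℕ, n ≥ 1} ∪ {0} is linearly homeomorphic to the closed sub-cone of ℝ₊^ℕ (with product topology) consisting of all nonincreasing sequences x₁ ≥ x₂ ≥ x₃ ≥ … ≥ 0. -/
/-!
Send `μ` to `(μ (tail n))ₙ`, where `tail n = X ∩ [0, 1/(n+1)]` is clopen, so this map is continuous
and additive. On the countable space `X` a finite measure is determined by its atoms, and
`μ {1/(n+1)} = μ (tail n) - μ (tail (n+1))`, `μ {0} = ⨅ n, μ (tail n)`, so the map is injective; a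
nonincreasing `x` is hit by `∑ₙ (xₙ - xₙ₊₁) δ_{1/(n+1)} + (⨅ x) δ₀`. The inverse is continuous
because the map is proper: on the preimage of a compact set the total mass `x₀` is bounded, and
measures of bounded mass on the compact space `X` form a compact set (Prokhorov).
-/

open MeasureTheory Filter Topology Set
open scoped NNReal ENNReal

/-- The space `{1/n : n ≥ 1} ∪ {0}` as a subset of `ℝ`. -/
def Xspace : Set ℝ := {x : ℝ | x = 0 ∨ ∃ n : ℕ, x = 1 / (n + 1)}

namespace MeasureTheory.FiniteMeasure

variable {Ω : Type*} [MeasurableSpace Ω] [TopologicalSpace Ω]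

theorem continuous_apply_of_isClopen [OpensMeasurableSpace Ω] {s : Set Ω} (hs : IsClopen s) :
    Continuous fun μ : FiniteMeasure Ω => μ s := by
  have key (μ : FiniteMeasure Ω) :
      ((μ s : ℝ≥0) : ℝ) = ∫ ω, BoundedContinuousFunction.indicator s hs ω ∂(μ : Measure Ω) := by
    simp [integral_indicator_one hs.isOpen.measurableSet]
  rw [NNReal.isEmbedding_coe.continuous_iff]
  simp_rw [Function.comp_def, key]
  exact continuous_iff_forall_continuous_integral.1 continuous_id _

theorem isProperMap_of_mass_le [T2Space Ω] [BorelSpace Ω] [CompactSpace Ω] {Y : Type*}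
    [TopologicalSpace Y] [T2Space Y] [CompactlyCoherentSpace Y] {F : FiniteMeasure Ω → Y}
    (hF : Continuous F) {g : Y → ℝ≥0} (hg : Continuous g) (hmass : ∀ μ, μ.mass ≤ g (F μ)) :
    IsProperMap F := by
  refine isProperMap_iff_isCompact_preimage.2 ⟨hF, fun L hL => ?_⟩
  obtain ⟨C, hC⟩ := (hL.image hg).bddAbove
  exact (isCompact_setOfPred_finiteMeasure_le_of_compactSpace Ω C).of_isClosed_subset
    (hL.isClosed.preimage hF) fun μ hμ => (hmass μ).trans (hC (mem_image_of_mem g hμ))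

end MeasureTheory.FiniteMeasure

namespace NNReal

theorem sum_range_sub_succ_of_antitone {x : ℕ → ℝ≥0} (hx : Antitone x) (N : ℕ) :
    ∑ n ∈ Finset.range N, (x n - x (n + 1)) = x 0 - x N := by
  induction N with
  | zero => simp
  | succ N ih =>
    rw [Finset.sum_range_succ, ih, tsub_add_tsub_cancel (hx (Nat.zero_le N)) (hx N.le_succ)]

theorem hasSum_sub_succ_of_antitone {x : ℕ → ℝ≥0} {L : ℝ≥0} (hx : Antitone x)
    (hL : Tendsto x atTop (𝓝 L)) : HasSum (fun n => x n - x (n + 1)) (x 0 - L) := by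
  rw [NNReal.hasSum_iff_tendsto_nat]
  simp_rw [sum_range_sub_succ_of_antitone hx]
  exact tendsto_const_nhds.sub hL

end NNReal

namespace Xspace

theorem eq_insert_range : Xspace = insert 0 (range fun n : ℕ => (1 : ℝ) / (n + 1)) := by
  ext x; simp [Xspace, eq_comm]

instance : Countable Xspace :=
  (eq_insert_range ▸ (countable_range _).insert 0 : Xspace.Countable).to_subtype

instance : CompactSpace Xspace :=
  isCompact_iff_compactSpace.1
    (eq_insert_range ▸ tendsto_one_div_add_atTop_nhds_zero_nat.isCompact_insert_range)

noncomputable def point (n : ℕ) : Xspace := ⟨1 / (n + 1), Or.inr ⟨n, rfl⟩⟩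

def origin : Xspace := ⟨0, Or.inl rfl⟩

theorem eq_origin_or_eq_point (p : Xspace) : p = origin ∨ ∃ n, p = point n := by
  obtain ⟨x, rfl | ⟨n, rfl⟩⟩ := p
  exacts [Or.inl rfl, Or.inr ⟨n, rfl⟩]

theorem point_injective : Function.Injective point := fun m n h => by
  simpa [point] using congrArg Subtype.val h

theorem point_ne_origin (n : ℕ) : point n ≠ origin := fun h =>
  (one_div_pos.2 n.cast_add_one_pos).ne' (congrArg Subtype.val h)

def tail (n : ℕ) : Set Xspace := {p | (p : ℝ) ≤ 1 / (n + 1)}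

theorem origin_mem_tail (n : ℕ) : origin ∈ tail n := by
  simp only [tail, origin, mem_ofPred_eq]; positivity

theorem point_mem_tail_iff {m n : ℕ} : point m ∈ tail n ↔ n ≤ m := by
  simp only [tail, point, mem_ofPred_eq]
  rw [one_div_le_one_div (by positivity) (by positivity)]
  norm_cast; omega

theorem tail_zero : tail 0 = univ := by
  refine eq_univ_of_forall fun p => ?_
  rcases eq_origin_or_eq_point p with rfl | ⟨m, rfl⟩
  exacts [origin_mem_tail 0, point_mem_tail_iff.2 m.zero_le]

theorem antitone_tail : Antitone tail := fun _ n h p hp =>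
  (show (p : ℝ) ≤ 1 / (n + 1) from hp).trans (Nat.one_div_le_one_div h)

theorem isClopen_tail (n : ℕ) : IsClopen (tail n) := by
  refine ⟨isClosed_le continuous_subtype_val continuous_const, ?_⟩
  refine isClosed_compl_iff.1 ((finite_Iio n).image point |>.subset fun p hp => ?_).isClosed
  rcases eq_origin_or_eq_point p with rfl | ⟨m, rfl⟩
  · exact absurd (origin_mem_tail n) hp
  · exact ⟨m, not_le.1 (mt point_mem_tail_iff.2 hp), rfl⟩

theorem measurableSet_tail (n : ℕ) : MeasurableSet (tail n) :=
  (isClopen_tail n).isClosed.measurableSet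

theorem iInter_tail : ⋂ n, tail n = {origin} := by
  ext p
  rcases eq_origin_or_eq_point p with rfl | ⟨m, rfl⟩
  · simp [origin_mem_tail]
  · simp only [mem_iInter, point_mem_tail_iff, mem_singleton_iff, point_ne_origin, iff_false]
    exact fun h => (h (m + 1)).not_gt m.lt_succ_self

theorem tail_diff_tail_succ (n : ℕ) : tail n \ tail (n + 1) = {point n} := by
  ext p
  rcases eq_origin_or_eq_point p with rfl | ⟨m, rfl⟩
  · simp [origin_mem_tail, (point_ne_origin n).symm]
  · simp only [Set.mem_sdiff, point_mem_tail_iff, mem_singleton_iff, point_injective.eq_iff]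
    omega

theorem measure_singleton_point (μ : Measure Xspace) [IsFiniteMeasure μ] (n : ℕ) :
    μ {point n} = μ (tail n) - μ (tail (n + 1)) := by
  rw [← tail_diff_tail_succ, measure_sdiff (antitone_tail n.le_succ)
    (measurableSet_tail _).nullMeasurableSet (measure_ne_top μ _)]

theorem measure_singleton_origin (μ : Measure Xspace) [IsFiniteMeasure μ] :
    μ {origin} = ⨅ n, μ (tail n) := by
  rw [← iInter_tail, antitone_tail.measure_iInter
    (fun n => (measurableSet_tail n).nullMeasurableSet) ⟨0, measure_ne_top μ _⟩]

theorem measure_ext_of_tail {μ ν : Measure Xspace} [IsFiniteMeasure μ] [IsFiniteMeasure ν]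
    (h : ∀ n, μ (tail n) = ν (tail n)) : μ = ν := by
  refine Measure.ext_iff_singleton.2 fun p => ?_
  rcases eq_origin_or_eq_point p with rfl | ⟨n, rfl⟩
  · simp only [measure_singleton_origin, h]
  · simp only [measure_singleton_point, h]

noncomputable def seqMeasure (x : ℕ → ℝ≥0) : Measure Xspace :=
  Measure.sum (fun n => ((x n - x (n + 1) : ℝ≥0) : ℝ≥0∞) • Measure.dirac (point n))
    + ((⨅ n, x n : ℝ≥0) : ℝ≥0∞) • Measure.dirac origin

theorem seqMeasure_tail {x : ℕ → ℝ≥0} (hx : Antitone x) (k : ℕ) :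
    seqMeasure x (tail k) = x k := by
  set d : ℕ → ℝ≥0∞ := fun n => ((x n - x (n + 1) : ℝ≥0) : ℝ≥0∞)
  have hL : Tendsto (fun m => x (m + k)) atTop (𝓝 (⨅ n, x n)) :=
    (tendsto_add_atTop_iff_nat k).2 (tendsto_atTop_ciInf hx (OrderBot.bddBelow _))
  have htail : HasSum (fun m => d (m + k)) (x k - ⨅ n, x n : ℝ≥0) := by
    refine ENNReal.hasSum_coe.2 ?_
    simpa [d, add_right_comm _ 1 k] using
      NNReal.hasSum_sub_succ_of_antitone (fun a b h => hx (by omega : a + k ≤ b + k)) hL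
  have hpoints : ∑' n, d n * (tail k).indicator 1 (point n) = (x k - ⨅ n, x n : ℝ≥0) := by
    rw [← Summable.sum_add_tsum_nat_add' (k := k) ENNReal.summable, Finset.sum_eq_zero]
    · simpa [indicator_apply, point_mem_tail_iff] using htail.tsum_eq
    · intro i hi
      simp [point_mem_tail_iff, Finset.mem_range.1 hi]
  simp only [seqMeasure, Measure.add_apply, Measure.sum_apply _ (measurableSet_tail k),
    Measure.smul_apply, Measure.dirac_apply, smul_eq_mul]
  rw [hpoints, indicator_of_mem (origin_mem_tail k), Pi.one_apply, mul_one, ← ENNReal.coe_add,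
    tsub_add_cancel_of_le (ciInf_le (OrderBot.bddBelow _) k)]

theorem isFiniteMeasure_seqMeasure {x : ℕ → ℝ≥0} (hx : Antitone x) :
    IsFiniteMeasure (seqMeasure x) :=
  ⟨by simp [← tail_zero, seqMeasure_tail hx]⟩

def toSeq (μ : FiniteMeasure Xspace) : {x : ℕ → ℝ≥0 // ∀ n, x (n + 1) ≤ x n} :=
  ⟨fun n => μ (tail n), fun n => μ.apply_mono (antitone_tail n.le_succ)⟩

theorem mass_eq_toSeq_zero (μ : FiniteMeasure Xspace) : μ.mass = (toSeq μ).1 0 := by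
  simp [toSeq, FiniteMeasure.mass, tail_zero]

theorem continuous_toSeq : Continuous toSeq :=
  (continuous_pi fun n => FiniteMeasure.continuous_apply_of_isClopen (isClopen_tail n)).subtype_mk _

theorem toSeq_injective : Function.Injective toSeq := fun μ ν h => by
  refine FiniteMeasure.toMeasure_injective (measure_ext_of_tail fun n => ?_)
  simpa [toSeq, FiniteMeasure.ennreal_coeFn_eq_coeFn_toMeasure] using
    congrArg (fun x => (x.1 n : ℝ≥0∞)) h

theorem toSeq_surjective : Function.Surjective toSeq := fun x => by
  have hx : Antitone x.1 := antitone_nat_of_succ_le x.2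
  exact ⟨⟨seqMeasure x.1, isFiniteMeasure_seqMeasure hx⟩,
    Subtype.ext (funext fun n => by simp [toSeq, seqMeasure_tail hx])⟩

theorem isClosedMap_toSeq : IsClosedMap toSeq :=
  (FiniteMeasure.isProperMap_of_mass_le continuous_toSeq
    ((continuous_apply 0).comp continuous_subtype_val)
    fun μ => (mass_eq_toSeq_zero μ).le).isClosedMap

noncomputable def homeomorph : FiniteMeasure Xspace ≃ₜ {x : ℕ → ℝ≥0 // ∀ n, x (n + 1) ≤ x n} :=
  (Equiv.ofBijective toSeq ⟨toSeq_injective, toSeq_surjective⟩).toHomeomorphOfContinuousClosed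
    continuous_toSeq isClosedMap_toSeq

end Xspace

/-- The cone of finite Borel measures on `{1/n : n ≥ 1} ∪ {0}` (with the weak-* topology)
is linearly homeomorphic to the closed subcone of `ℝ₊^ℕ` (with the product topology)
consisting of nonincreasing sequences. -/
theorem stmt2 :
    IsClosed {x : ℕ → NNReal | ∀ n, x (n + 1) ≤ x n} ∧
    ∃ f : FiniteMeasure Xspace ≃ₜ {x : ℕ → NNReal // ∀ n, x (n + 1) ≤ x n},
      (∀ μ ν : FiniteMeasure Xspace, (f (μ + ν)).1 = (f μ).1 + (f ν).1) ∧
      (∀ (c : NNReal) (μ : FiniteMeasure Xspace), (f (c • μ)).1 = c • (f μ).1) := by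
  refine ⟨?_, Xspace.homeomorph, fun μ ν => ?_, fun c μ => ?_⟩
  · simp only [ofPred_forall]
    exact isClosed_iInter fun n => isClosed_le (continuous_apply _) (continuous_apply _)
  · funext n
    exact congrFun (FiniteMeasure.coeFn_add μ ν) _
  · funext n
    exact congrFun (FiniteMeasure.coeFn_smul c μ) _
end

section
/- Let C be the limit of an inverse system C₁ ← C₂ ← C₃ ← ⋯ of finite-dimensional simplicial cones with linear bonding maps fₙ : Cₙ₊₁ → Cₙ such that fₙ(v) = 0 implies v = 0. Let B₁ be a base for C₁ and Bₙ = f₁ₙ⁻¹(B₁) where f₁ₙ = f₁ ∘ ⋯ ∘ fₙ₋₁. Then the inverse limit of the sets Bₙ is a base for C, i.e., a compact convex subset of C not containing 0 and meeting every ray of C from the origin exactly once. -/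
open Set

/-- `B` is a base for the convex cone `C`: a compact convex subset of `C` not containing `0`
meeting every ray of `C` from the origin in exactly one point. -/
def IsBase {V : Type*} [AddCommGroup V] [Module ℝ V] [TopologicalSpace V]
    (C B : Set V) : Prop :=
  B ⊆ C ∧ IsCompact B ∧ Convex ℝ B ∧ (0 : V) ∉ B ∧
    ∀ v ∈ C, v ≠ 0 → ∃! t : ℝ, 0 < t ∧ t • v ∈ B

/-- The composition `f₁ ∘ f₂ ∘ ⋯ ∘ fₙ₋₁` of the bonding maps, mapping the `n`-th space
to the `0`-th space. -/
def compMap (d : ℕ → ℕ) (f : ∀ n, (Fin (d (n + 1)) → ℝ) →ₗ[ℝ] (Fin (d n) → ℝ)) :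
    ∀ n, (Fin (d n) → ℝ) →ₗ[ℝ] (Fin (d 0) → ℝ)
  | 0 => LinearMap.id
  | n + 1 => (compMap d f n).comp (f n)

/-- The linear map sending coefficients to the corresponding combination of the `v i`. -/
noncomputable def sumMap {m k : ℕ} (v : Fin k → (Fin m → ℝ)) :
    (Fin k → ℝ) →ₗ[ℝ] (Fin m → ℝ) where
  toFun c := ∑ i, c i • v i
  map_add' a b := by simp [add_smul, Finset.sum_add_distrib]
  map_smul' t a := by simp [smul_smul, Finset.smul_sum]

lemma cone_eq_image {m k : ℕ} (v : Fin k → (Fin m → ℝ)) :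
    {x : Fin m → ℝ | ∃ c : Fin k → ℝ, (∀ i, 0 ≤ c i) ∧ x = ∑ i, c i • v i}
      = sumMap v '' {c | ∀ i, 0 ≤ c i} := by
  ext x
  simp only [mem_setOf_eq, mem_image, sumMap, LinearMap.coe_mk, AddHom.coe_mk]
  constructor
  · rintro ⟨c, hc, rfl⟩; exact ⟨c, hc, rfl⟩
  · rintro ⟨c, hc, rfl⟩; exact ⟨c, hc, rfl⟩

lemma cone_isClosed {m k : ℕ} (v : Fin k → (Fin m → ℝ)) (hv : LinearIndependent ℝ v) :
    IsClosed {x : Fin m → ℝ | ∃ c : Fin k → ℝ, (∀ i, 0 ≤ c i) ∧ x = ∑ i, c i • v i} := by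
  rw [cone_eq_image]
  have hker : LinearMap.ker (sumMap v) = ⊥ := by
    rw [LinearMap.ker_eq_bot']
    intro c hc
    funext i
    exact Fintype.linearIndependent_iff.mp hv c hc i
  have hP : IsClosed {c : Fin k → ℝ | ∀ i, 0 ≤ c i} := by
    have : {c : Fin k → ℝ | ∀ i, 0 ≤ c i} = ⋂ i, (fun c : Fin k → ℝ => c i) ⁻¹' Ici 0 := by
      ext c; simp
    rw [this]
    exact isClosed_iInter fun i => isClosed_Ici.preimage (continuous_apply i)
  exact ((sumMap v).isClosedEmbedding_of_injective hker).isClosedMap _ hP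

lemma cone_convex {m k : ℕ} (v : Fin k → (Fin m → ℝ)) :
    Convex ℝ {x : Fin m → ℝ | ∃ c : Fin k → ℝ, (∀ i, 0 ≤ c i) ∧ x = ∑ i, c i • v i} := by
  rw [cone_eq_image]
  refine Convex.linear_image ?_ (sumMap v)
  intro c hc d hd a b ha hb _
  intro i
  exact add_nonneg (mul_nonneg ha (hc i)) (mul_nonneg hb (hd i))

lemma cone_smul_mem {m k : ℕ} (v : Fin k → (Fin m → ℝ)) {t : ℝ} (ht : 0 ≤ t)
    {x : Fin m → ℝ}
    (hx : x ∈ {x : Fin m → ℝ | ∃ c : Fin k → ℝ, (∀ i, 0 ≤ c i) ∧ x = ∑ i, c i • v i}) :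
    t • x ∈ {x : Fin m → ℝ | ∃ c : Fin k → ℝ, (∀ i, 0 ≤ c i) ∧ x = ∑ i, c i • v i} := by
  obtain ⟨c, hc, rfl⟩ := hx
  exact ⟨fun i => t * c i, fun i => mul_nonneg ht (hc i), by
    simp [Finset.smul_sum, mul_smul]⟩

/-- The inverse limit of finite-dimensional simplicial cones with linear bonding maps whose
kernels meet the cones trivially admits, given a base `B₁` of the first cone, the inverse
limit of the bases `Bₙ = f₁ₙ⁻¹(B₁)` as a base. -/
theorem stmt4 (d : ℕ → ℕ) (C : ∀ n, Set (Fin (d n) → ℝ))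
    (hC : ∀ n, ∃ (k : ℕ) (v : Fin k → (Fin (d n) → ℝ)), LinearIndependent ℝ v ∧
      C n = {x | ∃ c : Fin k → ℝ, (∀ i, 0 ≤ c i) ∧ x = ∑ i, c i • v i})
    (f : ∀ n, (Fin (d (n + 1)) → ℝ) →ₗ[ℝ] (Fin (d n) → ℝ))
    (hmap : ∀ n, ∀ x ∈ C (n + 1), f n x ∈ C n)
    (hker : ∀ n, ∀ x ∈ C (n + 1), f n x = 0 → x = 0)
    (B₁ : Set (Fin (d 0) → ℝ)) (hB₁ : IsBase (C 0) B₁) :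
    IsBase {x : ∀ n, Fin (d n) → ℝ | (∀ n, x n ∈ C n) ∧ ∀ n, f n (x (n + 1)) = x n}
      {x : ∀ n, Fin (d n) → ℝ |
        (∀ n, x n ∈ C n ∧ compMap d f n (x n) ∈ B₁) ∧ ∀ n, f n (x (n + 1)) = x n} := by
  obtain ⟨hB₁C, hB₁comp, hB₁conv, hB₁0, hB₁ray⟩ := hB₁
  -- basic cone facts
  have hclosed : ∀ n, IsClosed (C n) := fun n => by
    obtain ⟨k, v, hv, hCn⟩ := hC n; rw [hCn]; exact cone_isClosed v hv
  have hconv : ∀ n, Convex ℝ (C n) := fun n => by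
    obtain ⟨k, v, hv, hCn⟩ := hC n; rw [hCn]; exact cone_convex v
  have hsmul : ∀ n (t : ℝ), 0 ≤ t → ∀ x ∈ C n, t • x ∈ C n := fun n t ht x hx => by
    obtain ⟨k, v, hv, hCn⟩ := hC n; rw [hCn] at hx ⊢; exact cone_smul_mem v ht hx
  -- compMap kills only 0 on the cone
  have hcompNe : ∀ n, ∀ x ∈ C n, compMap d f n x = 0 → x = 0 := by
    intro n
    induction n with
    | zero => intro x _ h; exact h
    | succ n ih =>
      intro x hx h
      exact hker n x hx (ih (f n x) (hmap n x hx) h)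
  -- for compatible sequences, compMap recovers the 0-th coordinate
  have hcompEq : ∀ (x : ∀ n, Fin (d n) → ℝ), (∀ n, f n (x (n + 1)) = x n) →
      ∀ n, compMap d f n (x n) = x 0 := by
    intro x hx n
    induction n with
    | zero => rfl
    | succ n ih =>
      have : compMap d f (n + 1) (x (n + 1)) = compMap d f n (f n (x (n + 1))) := rfl
      rw [this, hx n]; exact ih
  -- boundedness of each Bₙ
  obtain ⟨M, hM⟩ : ∃ M, ∀ y ∈ B₁, ‖y‖ ≤ M := hB₁comp.isBounded.exists_norm_le
  have hbound : ∀ n, ∃ R, ∀ x ∈ C n, compMap d f n x ∈ B₁ → ‖x‖ ≤ R := by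
    intro n
    by_cases hne : (C n ∩ Metric.sphere 0 1).Nonempty
    · have hScomp : IsCompact (C n ∩ Metric.sphere 0 1) :=
        (isCompact_sphere (0 : Fin (d n) → ℝ) 1).inter_left (hclosed n)
      obtain ⟨y₀, hy₀, hmin⟩ := hScomp.exists_isMinOn hne
        (((compMap d f n).continuous_of_finiteDimensional).norm.continuousOn)
      have hy₀ne : y₀ ≠ 0 := by
        intro h
        have := mem_sphere_zero_iff_norm.mp hy₀.2
        rw [h] at this; simp at this
      have hε : 0 < ‖compMap d f n y₀‖ := by
        rw [norm_pos_iff]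
        intro h
        exact hy₀ne (hcompNe n y₀ hy₀.1 h)
      set ε := ‖compMap d f n y₀‖ with hεdef
      refine ⟨M / ε, ?_⟩
      intro x hx hxB
      rcases eq_or_ne x 0 with rfl | hx0
      · exfalso
        rw [map_zero] at hxB
        exact hB₁0 hxB
      · have hxn : 0 < ‖x‖ := norm_pos_iff.mpr hx0
        have hy : ‖x‖⁻¹ • x ∈ C n ∩ Metric.sphere 0 1 := by
          refine ⟨hsmul n _ (by positivity) x hx, ?_⟩
          rw [mem_sphere_zero_iff_norm, norm_smul, norm_inv, norm_norm,
            inv_mul_cancel₀ hxn.ne']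
        have hle : ε ≤ ‖compMap d f n (‖x‖⁻¹ • x)‖ := hmin hy
        rw [map_smul, norm_smul, norm_inv, norm_norm] at hle
        have hcm : ‖compMap d f n x‖ ≤ M := hM _ hxB
        rw [le_div_iff₀ hε]
        calc ‖x‖ * ε ≤ ‖x‖ * (‖x‖⁻¹ * ‖compMap d f n x‖) := by
              exact mul_le_mul_of_nonneg_left hle hxn.le
          _ = ‖compMap d f n x‖ := by field_simp
          _ ≤ M := hcm
    · refine ⟨0, ?_⟩
      intro x hx _
      rcases eq_or_ne x 0 with rfl | hx0
      · simp
      · exfalso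
        apply hne
        have hxn : 0 < ‖x‖ := norm_pos_iff.mpr hx0
        refine ⟨‖x‖⁻¹ • x, hsmul n _ (by positivity) x hx, ?_⟩
        rw [mem_sphere_zero_iff_norm, norm_smul, norm_inv, norm_norm,
          inv_mul_cancel₀ hxn.ne']
  choose R hR using hbound
  -- the candidate base
  set B : Set (∀ n, Fin (d n) → ℝ) := {x : ∀ n, Fin (d n) → ℝ |
      (∀ n, x n ∈ C n ∧ compMap d f n (x n) ∈ B₁) ∧ ∀ n, f n (x (n + 1)) = x n} with hBdef
  have hBclosed : IsClosed B := by
    have hBeq : B = (⋂ n, (fun x : ∀ n, Fin (d n) → ℝ => x n) ⁻¹' C n) ∩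
        (⋂ n, (fun x : ∀ n, Fin (d n) → ℝ => compMap d f n (x n)) ⁻¹' B₁) ∩
        (⋂ n, {x : ∀ n, Fin (d n) → ℝ | f n (x (n + 1)) = x n}) := by
      ext x
      simp only [hBdef, mem_setOf_eq, mem_inter_iff, mem_iInter, mem_preimage]
      constructor
      · rintro ⟨h1, h2⟩
        exact ⟨⟨fun n => (h1 n).1, fun n => (h1 n).2⟩, h2⟩
      · rintro ⟨⟨h1, h2⟩, h3⟩
        exact ⟨fun n => ⟨h1 n, h2 n⟩, h3⟩
    rw [hBeq]
    refine IsClosed.inter (IsClosed.inter ?_ ?_) ?_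
    · exact isClosed_iInter fun n => (hclosed n).preimage (continuous_apply n)
    · exact isClosed_iInter fun n => hB₁comp.isClosed.preimage
        (((compMap d f n).continuous_of_finiteDimensional).comp (continuous_apply n))
    · exact isClosed_iInter fun n => isClosed_eq
        (((f n).continuous_of_finiteDimensional).comp (continuous_apply (n + 1)))
        (continuous_apply n)
  have hBcompact : IsCompact B := by
    refine IsCompact.of_isClosed_subset (isCompact_univ_pi
      (fun n => isCompact_closedBall (0 : Fin (d n) → ℝ) (R n))) hBclosed ?_
    intro x hx n _
    rw [Metric.mem_closedBall, dist_zero_right]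
    exact hR n (x n) (hx.1 n).1 (hx.1 n).2
  refine ⟨?_, hBcompact, ?_, ?_, ?_⟩
  · -- B ⊆ C
    intro x hx
    exact ⟨fun n => (hx.1 n).1, hx.2⟩
  · -- convex
    intro x hx y hy a b ha hb hab
    refine ⟨fun n => ?_, fun n => ?_⟩
    · constructor
      · have := hconv n (hx.1 n).1 (hy.1 n).1 ha hb hab
        simpa using this
      · have h1 := (hx.1 n).2
        have h2 := (hy.1 n).2
        have := hB₁conv h1 h2 ha hb hab
        simpa [map_add, map_smul] using this
    · have h1 := hx.2 n
      have h2 := hy.2 n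
      simp only [Pi.add_apply, Pi.smul_apply, map_add, map_smul, h1, h2]
  · -- 0 ∉ B
    intro h
    have := (h.1 0).2
    simp only [Pi.zero_apply, map_zero] at this
    exact hB₁0 this
  · -- rays
    intro w hw hw0
    have hw0' : w 0 ≠ 0 := by
      intro h0
      apply hw0
      have hall : ∀ n, w n = 0 := by
        intro n
        induction n with
        | zero => exact h0
        | succ n ih => exact hker n _ (hw.1 (n + 1)) ((hw.2 n).trans ih)
      funext n
      exact hall n
    obtain ⟨t, ⟨ht, htB⟩, huniq⟩ := hB₁ray (w 0) (hw.1 0) hw0'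
    refine ⟨t, ⟨ht, ?_, ?_⟩, ?_⟩
    · intro n
      constructor
      · have := hsmul n t ht.le (w n) (hw.1 n)
        simpa using this
      · have : compMap d f n (t • w n) = t • compMap d f n (w n) := map_smul _ _ _
        simp only [Pi.smul_apply]
        rw [this, hcompEq w hw.2 n]
        exact htB
    · intro n
      simp only [Pi.smul_apply, map_smul, hw.2 n]
    · rintro s ⟨hs, hsB, _⟩
      have := (hsB 0).2
      simp only [Pi.smul_apply] at this
      exact huniq s ⟨hs, this⟩
end

section
/- Let M₀ = [[2,1],[1,1]] and Mₑ = [[1,1],[1,2]] as linear maps on ℝ². Then the intersection over all j ≥ 0 of the cones M₀^j(ℝ₊²) equals the ray spanned by the vector (φ, 1), where φ = (1+√5)/2 is the golden ratio, and the intersection of the cones Mₑ^j(ℝ₊²) equals the ray spanned by (φ−1, 1). -/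
/-- General lemma: the intersection of image cones of the quadrant under powers of `M`
is the ray spanned by the attracting eigenvector `e`, given eigen-coordinates `a`, `b`. -/
lemma cone_inter_eq_ray (M : Matrix (Fin 2) (Fin 2) ℝ) (e : Fin 2 → ℝ)
    (a b : (Fin 2 → ℝ) → ℝ) (μ₁ μ₂ C : ℝ)
    (hμ₁ : 0 < μ₁) (hμ₂ : 0 ≤ μ₂) (hr : μ₂ < μ₁)
    (he0 : 0 ≤ e 0) (he1 : 0 ≤ e 1)
    (heig : M.mulVec e = μ₁ • e)
    (ha : ∀ v, a (M.mulVec v) = μ₁ * a v)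
    (hb : ∀ v, b (M.mulVec v) = μ₂ * b v)
    (hdecomp : ∀ v, b v = 0 → v = a v • e)
    (hquad : ∀ v : Fin 2 → ℝ, 0 ≤ v 0 → 0 ≤ v 1 → 0 ≤ a v ∧ |b v| ≤ C * a v) :
    (⋂ j : ℕ, (fun v : Fin 2 → ℝ => (M ^ j).mulVec v) ''
        {v : Fin 2 → ℝ | 0 ≤ v 0 ∧ 0 ≤ v 1})
      = {v : Fin 2 → ℝ | ∃ c : ℝ, 0 ≤ c ∧ v = c • e} := by
  have heigpow : ∀ j : ℕ, (M ^ j).mulVec e = (μ₁ ^ j) • e := by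
    intro j
    induction j with
    | zero => simp
    | succ n ih =>
      rw [pow_succ', ← Matrix.mulVec_mulVec, ih, Matrix.mulVec_smul, heig,
        smul_smul, pow_succ']
      ring_nf
  have hapow : ∀ (j : ℕ) (w : Fin 2 → ℝ), a ((M ^ j).mulVec w) = μ₁ ^ j * a w := by
    intro j w
    induction j with
    | zero => simp
    | succ n ih =>
      rw [pow_succ', ← Matrix.mulVec_mulVec, ha, ih, pow_succ']; ring
  have hbpow : ∀ (j : ℕ) (w : Fin 2 → ℝ), b ((M ^ j).mulVec w) = μ₂ ^ j * b w := by
    intro j w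
    induction j with
    | zero => simp
    | succ n ih =>
      rw [pow_succ', ← Matrix.mulVec_mulVec, hb, ih, pow_succ']; ring
  ext v
  simp only [Set.mem_iInter, Set.mem_image, Set.mem_setOf_eq]
  constructor
  · intro h
    -- a v ≥ 0 from j = 0
    have hv0 : 0 ≤ a v := by
      obtain ⟨w, hw, hwe⟩ := h 0
      have : v = w := by rw [← hwe]; simp
      rw [this]
      exact (hquad w hw.1 hw.2).1
    have hbound : ∀ j : ℕ, |b v| ≤ C * a v * (μ₂ / μ₁) ^ j := by
      intro j
      obtain ⟨w, hw, hwe⟩ := h j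
      have hav : a v = μ₁ ^ j * a w := by rw [← hwe, hapow]
      have hbv : b v = μ₂ ^ j * b w := by rw [← hwe, hbpow]
      have hq := hquad w hw.1 hw.2
      have hμ₁j : (0:ℝ) < μ₁ ^ j := pow_pos hμ₁ j
      have : C * a v * (μ₂ / μ₁) ^ j = C * a w * μ₂ ^ j := by
        rw [hav, div_pow]
        field_simp
      rw [this, hbv, abs_mul, abs_pow, abs_of_nonneg hμ₂]
      have h2 : μ₂ ^ j * |b w| ≤ μ₂ ^ j * (C * a w) :=
        mul_le_mul_of_nonneg_left hq.2 (pow_nonneg hμ₂ j)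
      linarith
    have hbz : b v = 0 := by
      have hr0 : 0 ≤ μ₂ / μ₁ := div_nonneg hμ₂ hμ₁.le
      have hr1 : μ₂ / μ₁ < 1 := (div_lt_one hμ₁).mpr hr
      have htend : Filter.Tendsto (fun j : ℕ => C * a v * (μ₂ / μ₁) ^ j)
          Filter.atTop (nhds 0) := by
        have := (tendsto_pow_atTop_nhds_zero_of_lt_one hr0 hr1).const_mul (C * a v)
        simpa using this
      have : |b v| ≤ 0 := ge_of_tendsto' htend hbound
      have := abs_nonneg (b v)
      have : |b v| = 0 := le_antisymm ‹|b v| ≤ 0› ‹0 ≤ |b v|›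
      exact abs_eq_zero.mp this
    exact ⟨a v, hv0, hdecomp v hbz⟩
  · rintro ⟨c, hc, rfl⟩ j
    refine ⟨(c / μ₁ ^ j) • e, ⟨?_, ?_⟩, ?_⟩
    · have : (0:ℝ) ≤ c / μ₁ ^ j := div_nonneg hc (pow_nonneg hμ₁.le j)
      simpa using mul_nonneg this he0
    · have : (0:ℝ) ≤ c / μ₁ ^ j := div_nonneg hc (pow_nonneg hμ₁.le j)
      simpa using mul_nonneg this he1
    · rw [Matrix.mulVec_smul, heigpow, smul_smul, div_mul_cancel₀]
      exact (pow_pos hμ₁ j).ne'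

/-- The intersections of the image cones of the positive quadrant under powers of
`M₀ = [[2,1],[1,1]]` and `Mₑ = [[1,1],[1,2]]` are the rays spanned by `(φ, 1)` and
`(φ - 1, 1)` respectively, where `φ = (1 + √5)/2` is the golden ratio. -/
theorem stmt6 :
    (⋂ j : ℕ, (fun v : Fin 2 → ℝ =>
        ((!![2, 1; 1, 1] : Matrix (Fin 2) (Fin 2) ℝ) ^ j).mulVec v) ''
          {v : Fin 2 → ℝ | 0 ≤ v 0 ∧ 0 ≤ v 1}
      = {v : Fin 2 → ℝ | ∃ c : ℝ, 0 ≤ c ∧ v = c • ![(1 + Real.sqrt 5) / 2, 1]}) ∧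
    (⋂ j : ℕ, (fun v : Fin 2 → ℝ =>
        ((!![1, 1; 1, 2] : Matrix (Fin 2) (Fin 2) ℝ) ^ j).mulVec v) ''
          {v : Fin 2 → ℝ | 0 ≤ v 0 ∧ 0 ≤ v 1}
      = {v : Fin 2 → ℝ | ∃ c : ℝ, 0 ≤ c ∧ v = c • ![(1 + Real.sqrt 5) / 2 - 1, 1]}) := by
  set s := Real.sqrt 5 with hsdef
  have hs : s * s = 5 := Real.mul_self_sqrt (by norm_num)
  have hsnn : 0 ≤ s := Real.sqrt_nonneg 5
  have hs2 : 2 < s := by nlinarith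
  have hs3 : s < 3 := by nlinarith
  constructor
  · apply cone_inter_eq_ray _ _ (fun v => (v 0 + (s - 1) / 2 * v 1) / s)
      (fun v => ((1 + s) / 2 * v 1 - v 0) / s) ((3 + s) / 2) ((3 - s) / 2) ((3 + s) / 2)
    · linarith
    · linarith
    · linarith
    · simp; linarith
    · simp
    · funext i
      fin_cases i <;>
        simp [Matrix.mulVec, dotProduct, Fin.sum_univ_two] <;> nlinarith
    · intro v
      simp [Matrix.mulVec, dotProduct, Fin.sum_univ_two]
      rw [← mul_div_assoc]
      congr 1
      linear_combination (-(v 1) / 4) * hs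
    · intro v
      simp [Matrix.mulVec, dotProduct, Fin.sum_univ_two]
      rw [← mul_div_assoc]
      congr 1
      linear_combination (v 1 / 4) * hs
    · intro v hv
      have hv' : v 0 = (1 + s) / 2 * v 1 := by
        field_simp at hv; linarith
      funext i
      fin_cases i <;> simp [hv'] <;> field_simp <;> ring
    · intro v h0 h1
      constructor
      · apply div_nonneg _ hsnn
        nlinarith
      · have hspos : (0:ℝ) < s := by linarith
        rw [abs_le]
        constructor
        · rw [← mul_div_assoc, ← neg_div, div_le_div_iff₀ hspos hspos]
          nlinarith [mul_nonneg hsnn h0, mul_nonneg hsnn h1,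
            mul_nonneg (mul_nonneg hsnn hsnn) h0, mul_nonneg (mul_nonneg hsnn hsnn) h1]
        · rw [← mul_div_assoc, div_le_div_iff₀ hspos hspos]
          nlinarith [mul_nonneg hsnn h0, mul_nonneg hsnn h1,
            mul_nonneg (mul_nonneg hsnn hsnn) h0, mul_nonneg (mul_nonneg hsnn hsnn) h1]
  · apply cone_inter_eq_ray _ _ (fun v => (v 0 + (1 + s) / 2 * v 1) / s)
      (fun v => ((s - 1) / 2 * v 1 - v 0) / s) ((3 + s) / 2) ((3 - s) / 2) ((3 + s) / 2)
    · linarith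
    · linarith
    · linarith
    · simp; linarith
    · simp
    · funext i
      fin_cases i <;>
        simp [Matrix.mulVec, dotProduct, Fin.sum_univ_two] <;> nlinarith
    · intro v
      simp [Matrix.mulVec, dotProduct, Fin.sum_univ_two]
      rw [← mul_div_assoc]
      congr 1
      linear_combination (-(v 1) / 4) * hs
    · intro v
      simp [Matrix.mulVec, dotProduct, Fin.sum_univ_two]
      rw [← mul_div_assoc]
      congr 1
      linear_combination (v 1 / 4) * hs
    · intro v hv
      have hv' : v 0 = (s - 1) / 2 * v 1 := by
        field_simp at hv; linarith
      funext i
      fin_cases i <;> simp [hv'] <;> field_simp <;> ring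
    · intro v h0 h1
      constructor
      · apply div_nonneg _ hsnn
        nlinarith
      · have hspos : (0:ℝ) < s := by linarith
        rw [abs_le]
        constructor
        · rw [← mul_div_assoc, ← neg_div, div_le_div_iff₀ hspos hspos]
          nlinarith [mul_nonneg hsnn h0, mul_nonneg hsnn h1,
            mul_nonneg (mul_nonneg hsnn hsnn) h0, mul_nonneg (mul_nonneg hsnn hsnn) h1]
        · rw [← mul_div_assoc, div_le_div_iff₀ hspos hspos]
          nlinarith [mul_nonneg hsnn h0, mul_nonneg hsnn h1,
            mul_nonneg (mul_nonneg hsnn hsnn) h0, mul_nonneg (mul_nonneg hsnn hsnn) h1]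
end

section
/- The limit of the inverse system ℝ₊ ← ℝ₊² ← ℝ₊³ ← ⋯, where the map ℝ₊^{n+1} → ℝ₊^n is given by the n×(n+1) matrix whose i-th row is the standard basis vector eᵢ for i < n and whose n-th row is eₙ + eₙ₊₁ (i.e., (x₁,…,xₙ₊₁) ↦ (x₁,…,xₙ₋₁, xₙ + xₙ₊₁)), is linearly homeomorphic to the cone C = {(x, y₁, y₂, …) : yᵢ ≥ 0 for all i and x ≥ Σᵢ yᵢ} ⊆ ℝ₊ × ℝ₊^ℕ, where C carries the topology in which a net converges iff all coordinates x and yᵢ converge. -/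
/-!
A point of the inverse limit is determined by its first coordinate `x₀⁰` and its stabilized
coordinates `xₙ₊₁ⁿ`: the bonding maps never change a coordinate once it is not the last one, and the
last coordinate of `xₙ` is `x₀⁰ - Σ_{k<n} xₖ₊₁ᵏ`. Nonnegativity of these last coordinates is exactly
the cone condition `Σ yᵢ ≤ x`, and both directions of the correspondence are coordinate projections
or finite sums of them, hence continuous.
-/

/-- The inverse limit of the system `ℝ₊ ← ℝ₊² ← ℝ₊³ ← ⋯` where the bonding map
`ℝ₊^{n+2} → ℝ₊^{n+1}` keeps the first `n` coordinates and adds the last two. -/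
def L7 : Set (∀ n : ℕ, Fin (n + 1) → ℝ) :=
  {x | (∀ n i, 0 ≤ x n i) ∧ ∀ (n : ℕ) (i : Fin (n + 1)),
    x n i = if (i : ℕ) = n then x (n + 1) i.castSucc + x (n + 1) (Fin.last (n + 1))
            else x (n + 1) i.castSucc}

/-- The cone `{(x, y₁, y₂, …) : yᵢ ≥ 0, Σᵢ yᵢ ≤ x}`. -/
def C7 : Set (ℝ × (ℕ → ℝ)) :=
  {p | (∀ i, 0 ≤ p.2 i) ∧ ∀ s : Finset ℕ, ∑ i ∈ s, p.2 i ≤ p.1}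

open Finset

noncomputable def toCone : (∀ n : ℕ, Fin (n + 1) → ℝ) →ₗ[ℝ] ℝ × (ℕ → ℝ) where
  toFun x := (x 0 0, fun n => x (n + 1) ⟨n, by omega⟩)
  map_add' x y := by ext <;> simp
  map_smul' c x := by ext <;> simp

noncomputable def ofCone (p : ℝ × (ℕ → ℝ)) (n : ℕ) (i : Fin (n + 1)) : ℝ :=
  if (i : ℕ) < n then p.2 i else p.1 - ∑ k ∈ range n, p.2 k

section InverseLimit

variable {x : ∀ n : ℕ, Fin (n + 1) → ℝ}

lemma apply_eq_apply_succ_of_mem_L7 (hx : x ∈ L7) {n i : ℕ} (hi : i < n) :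
    x n ⟨i, by omega⟩ = x (i + 1) ⟨i, by omega⟩ := by
  induction n with
  | zero => omega
  | succ m ih =>
    rcases Nat.lt_succ_iff_lt_or_eq.mp hi with hlt | rfl
    · have hstep := hx.2 m ⟨i, by omega⟩
      rw [if_neg (by simp only; omega)] at hstep
      exact hstep.symm.trans (ih hlt)
    · rfl

lemma apply_last_of_mem_L7 (hx : x ∈ L7) (n : ℕ) :
    x n (Fin.last n) = x 0 0 - ∑ k ∈ range n, x (k + 1) ⟨k, by omega⟩ := by
  induction n with
  | zero => simp [Fin.last]
  | succ m ih =>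
    have hstep := hx.2 m (Fin.last m)
    rw [if_pos (by simp [Fin.last])] at hstep
    have hlast : x (m + 1) (Fin.castSucc (Fin.last m)) = x (m + 1) ⟨m, by omega⟩ := rfl
    rw [sum_range_succ]
    linarith

lemma ofCone_toCone (hx : x ∈ L7) : ofCone (toCone x) = x := by
  funext n i
  by_cases hi : (i : ℕ) < n
  · simp only [ofCone, toCone, LinearMap.coe_mk, AddHom.coe_mk, if_pos hi]
    exact (apply_eq_apply_succ_of_mem_L7 hx hi).symm
  · obtain rfl : i = Fin.last n := Fin.ext (by simp only [Fin.val_last]; omega)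
    simp only [ofCone, toCone, LinearMap.coe_mk, AddHom.coe_mk, Fin.val_last, lt_irrefl,
      if_false]
    exact (apply_last_of_mem_L7 hx n).symm

lemma toCone_mem_C7 (hx : x ∈ L7) : toCone x ∈ C7 := by
  refine ⟨fun i => hx.1 _ _, fun s => ?_⟩
  obtain ⟨N, hsN⟩ := s.exists_nat_subset_range
  calc ∑ i ∈ s, (toCone x).2 i
      ≤ ∑ i ∈ range N, (toCone x).2 i := sum_le_sum_of_subset_of_nonneg hsN fun _ _ _ => hx.1 _ _
    _ = x 0 0 - x N (Fin.last N) := by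
      rw [apply_last_of_mem_L7 hx N]
      simp [toCone]
    _ ≤ x 0 0 := sub_le_self _ (hx.1 _ _)

end InverseLimit

lemma toCone_ofCone (p : ℝ × (ℕ → ℝ)) : toCone (ofCone p) = p := by
  ext n <;> simp [toCone, ofCone]

lemma ofCone_mem_L7 {p : ℝ × (ℕ → ℝ)} (hp : p ∈ C7) : ofCone p ∈ L7 := by
  refine ⟨fun n i => ?_, fun n i => ?_⟩
  · unfold ofCone
    split_ifs
    · exact hp.1 i
    · exact sub_nonneg.mpr (hp.2 (range n))
  · by_cases hi : (i : ℕ) = n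
    · simp only [ofCone, Fin.val_castSucc, Fin.val_last, hi, lt_irrefl, Nat.lt_succ_self,
        if_true, if_false, sum_range_succ]
      ring
    · have hlt : (i : ℕ) < n := by omega
      simp [ofCone, hi, hlt, Nat.lt_succ_of_lt hlt]

lemma continuous_toCone : Continuous toCone := by
  simp only [toCone, LinearMap.coe_mk, AddHom.coe_mk]
  fun_prop

lemma continuous_ofCone : Continuous ofCone :=
  continuous_pi fun n => continuous_pi fun i => by
    unfold ofCone
    split_ifs <;> fun_prop

/-- The inverse limit `L7` is linearly homeomorphic to the cone `C7` (with the topology of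
coordinatewise convergence). -/
theorem stmt7 :
    ∃ (f : (∀ n : ℕ, Fin (n + 1) → ℝ) →ₗ[ℝ] ℝ × (ℕ → ℝ)) (g : ℝ × (ℕ → ℝ) → ∀ n : ℕ, Fin (n + 1) → ℝ),
      f '' L7 = C7 ∧ Set.InjOn f L7 ∧ ContinuousOn f L7 ∧ ContinuousOn g C7 ∧
      (∀ x ∈ L7, g (f x) = x) ∧ ∀ y ∈ C7, g y ∈ L7 ∧ f (g y) = y := by
  have hleft : Set.LeftInvOn ofCone toCone L7 := fun x hx => ofCone_toCone hx
  refine ⟨toCone, ofCone, ?_, hleft.injOn, continuous_toCone.continuousOn,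
    continuous_ofCone.continuousOn, hleft, fun p hp => ⟨ofCone_mem_L7 hp, toCone_ofCone p⟩⟩
  exact Set.Subset.antisymm (Set.image_subset_iff.2 fun x hx => toCone_mem_C7 hx)
    fun p hp => ⟨ofCone p, ofCone_mem_L7 hp, toCone_ofCone p⟩
end

section
/- The cone ℝ₊^ℕ (the countable product of copies of [0,∞) with the product topology) admits no base: there is no compact convex subset not containing 0 that intersects every ray from the origin in exactly one point. -/
/-- The cone `ℝ₊^ℕ` (countable product of copies of `[0,∞)` with the product topology)
admits no base: there is no compact convex subset of the cone avoiding `0` that meets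
every ray from the origin exactly once. -/
theorem stmt9 :
    ¬ ∃ B : Set (ℕ → ℝ), B ⊆ {x | ∀ i, 0 ≤ x i} ∧ IsCompact B ∧ Convex ℝ B ∧
      (0 : ℕ → ℝ) ∉ B ∧
      ∀ v : ℕ → ℝ, (∀ i, 0 ≤ v i) → v ≠ 0 → ∃! t : ℝ, 0 < t ∧ t • v ∈ B := by
  rintro ⟨B, hBsub, hBcomp, hBconv, h0, hray⟩
  set e : ℕ → ℕ → ℝ := fun i j => if j = i then 1 else 0 with he
  have hne : ∀ i, e i ≠ 0 := by
    intro i h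
    have := congrFun h i
    simp [he] at this
  have hnn : ∀ i j, 0 ≤ e i j := by
    intro i j; simp only [he]; split <;> norm_num
  choose t ht using fun i => (hray (e i) (hnn i) (hne i)).exists
  set b : ℕ → ℕ → ℝ := fun i => t i • e i with hb
  have hbB : ∀ i, b i ∈ B := fun i => (ht i).2
  have htend : Filter.Tendsto b Filter.atTop (nhds 0) := by
    rw [tendsto_pi_nhds]
    intro j
    have : ∀ i, i > j → b i j = 0 := by
      intro i hij
      simp [hb, he, Nat.ne_of_lt hij]
    refine Filter.Tendsto.congr' ?_ tendsto_const_nhds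
    filter_upwards [Filter.eventually_gt_atTop j] with i hi
    exact (this i hi).symm
  exact h0 (hBcomp.isClosed.mem_of_tendsto htend (Filter.Eventually.of_forall hbB))
end

section
/- Let M be a p×q real matrix with nonnegative entries all of whose column sums equal 1, with p ≥ 2. For any ε > 0 there exists a p×q matrix M′ such that: all entries of M′ are positive and all of its column sums equal 1; every entry of M′ differs from the corresponding entry of M by less than ε; and some positive scalar multiple of M′ has all entries positive odd integers. -/
/-!
Scale by an integer `N ≡ p (mod 2)` with `N ≥ p²` and `N ε > p`. In each column of `N M` round
every entry but one to an odd integer within distance `1`, and let an entry of size at least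
`N / p ≥ p` absorb the rounding error so that the column still sums to `N`. That entry is `N`
minus a sum of `p - 1` odd integers, hence odd, and it moved by at most `p - 1`, hence stays
positive. Dividing by `N` gives `M'`, with `c = N`.
-/

open Finset

theorem abs_two_mul_floor_half_add_one_sub_le {α : Type*} [Field α] [LinearOrder α]
    [IsStrictOrderedRing α] [FloorSemiring α] {x : α} (hx : 0 ≤ x) :
    |(2 * ⌊x / 2⌋₊ + 1 : α) - x| ≤ 1 := by
  have h₁ := Nat.floor_le (div_nonneg hx zero_le_two)
  have h₂ := Nat.lt_floor_add_one (x / 2)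
  rw [abs_le]
  constructor <;> linarith

variable {ι : Type*} [Fintype ι]

theorem exists_odd_round_of_card_le [DecidableEq ι] {x : ι → ℝ} (hx : ∀ i, 0 ≤ x i) {N : ℕ}
    (hsum : ∑ i, x i = N) (hpar : Even (N + Fintype.card ι)) {k : ι}
    (hk : (Fintype.card ι : ℝ) ≤ x k) :
    ∃ n : ι → ℕ, (∀ i, Odd (n i)) ∧ ∑ i, n i = N ∧
      ∀ i, |(n i : ℝ) - x i| ≤ Fintype.card ι - 1 := by
  set a : ι → ℕ := fun i => ⌊x i / 2⌋₊
  have ha (i : ι) : |(2 * a i + 1 : ℝ) - x i| ≤ 1 := abs_two_mul_floor_half_add_one_sub_le (hx i)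
  have hcard : 1 ≤ Fintype.card ι := Fintype.card_pos_iff.mpr ⟨k⟩
  set S := ∑ i ∈ univ.erase k, (2 * a i + 1)
  have hS : S = 2 * ∑ i ∈ univ.erase k, a i + (Fintype.card ι - 1) := by
    simp [S, sum_add_distrib, mul_sum, card_erase_of_mem]
  have hSx : |(S : ℝ) - (N - x k)| ≤ Fintype.card ι - 1 := by
    have hxk : (N : ℝ) - x k = ∑ i ∈ univ.erase k, x i := by
      rw [← hsum, ← add_sum_erase _ _ (mem_univ k)]; ring
    rw [hxk, show (Fintype.card ι : ℝ) - 1 = ∑ i ∈ univ.erase k, (1 : ℝ) by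
      simp [card_erase_of_mem, Nat.cast_sub hcard]]
    push_cast [S, ← sum_sub_distrib]
    exact (abs_sum_le_sum_abs _ _).trans (sum_le_sum fun i _ => ha i)
  have hSN : S < N := by
    have := (abs_le.mp hSx).2
    exact_mod_cast (show (S : ℝ) < N by linarith)
  refine ⟨Function.update (fun i => 2 * a i + 1) k (N - S), fun i => ?_, ?_, fun i => ?_⟩
  · rcases eq_or_ne i k with rfl | hi
    · obtain ⟨r, hr⟩ := hpar
      simp only [Function.update_self]
      exact ⟨r - ∑ j ∈ univ.erase i, a j - Fintype.card ι, by omega⟩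
    · simp [Function.update_of_ne hi]
  · rw [sum_update_of_mem (mem_univ k), sdiff_singleton_eq_erase]
    omega
  · rcases eq_or_ne i k with rfl | hi
    · rw [Function.update_self, Nat.cast_sub hSN.le, ← abs_neg]
      convert hSx using 2
      ring
    · have : Nontrivial ι := ⟨⟨i, k, hi⟩⟩
      have : (2 : ℝ) ≤ Fintype.card ι := by exact_mod_cast Fintype.one_lt_card
      rw [Function.update_of_ne hi]
      push_cast
      linarith [ha i]

theorem exists_odd_round_of_sq_card_le [Nonempty ι] [DecidableEq ι] {x : ι → ℝ}
    (hx : ∀ i, 0 ≤ x i) {N : ℕ} (hsum : ∑ i, x i = N) (hpar : Even (N + Fintype.card ι))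
    (hN : Fintype.card ι ^ 2 ≤ N) :
    ∃ n : ι → ℕ, (∀ i, Odd (n i)) ∧ ∑ i, n i = N ∧
      ∀ i, |(n i : ℝ) - x i| ≤ Fintype.card ι - 1 := by
  have hcard : (0 : ℝ) < Fintype.card ι := by exact_mod_cast Fintype.card_pos
  obtain ⟨k, -, hk⟩ : ∃ k ∈ univ, (N : ℝ) / Fintype.card ι ≤ x k :=
    exists_le_of_sum_le univ_nonempty (by simp [hsum, mul_div_cancel₀ _ hcard.ne'])
  refine exists_odd_round_of_card_le hx hsum hpar (le_trans ?_ hk)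
  rw [le_div_iff₀ hcard, ← sq]
  exact_mod_cast hN

theorem exists_nat_even_add_sq_le_lt_mul (p : ℕ) {ε : ℝ} (hε : 0 < ε) :
    ∃ N : ℕ, Even (N + p) ∧ p ^ 2 ≤ N ∧ (p : ℝ) < N * ε := by
  refine ⟨2 * (⌈p / ε⌉₊ + p ^ 2 + 1) + p, ⟨⌈p / ε⌉₊ + p ^ 2 + 1 + p, by ring⟩, by omega, ?_⟩
  rw [← div_lt_iff₀ hε]
  calc (p : ℝ) / ε ≤ ⌈p / ε⌉₊ := Nat.le_ceil _
    _ < ((2 * (⌈p / ε⌉₊ + p ^ 2 + 1) + p : ℕ) : ℝ) := by exact_mod_cast (by omega)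

/-- Any column-stochastic `p × q` matrix (`p ≥ 2`) can be approximated entrywise within
`ε` by a column-stochastic matrix with positive entries having a positive scalar multiple
all of whose entries are positive odd integers. -/
theorem stmt10 (p q : ℕ) (hp : 2 ≤ p) (M : Matrix (Fin p) (Fin q) ℝ)
    (hM0 : ∀ i j, 0 ≤ M i j) (hM1 : ∀ j, ∑ i, M i j = 1) (ε : ℝ) (hε : 0 < ε) :
    ∃ M' : Matrix (Fin p) (Fin q) ℝ,
      (∀ i j, 0 < M' i j) ∧ (∀ j, ∑ i, M' i j = 1) ∧
      (∀ i j, |M' i j - M i j| < ε) ∧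
      ∃ c : ℝ, 0 < c ∧ ∀ i j, ∃ m : ℕ, c * M' i j = 2 * (m : ℝ) + 1 := by
  have : Nonempty (Fin p) := ⟨⟨0, by omega⟩⟩
  obtain ⟨N, hpar, hpN, hNε⟩ := exists_nat_even_add_sq_le_lt_mul p hε
  have hN : (0 : ℝ) < N := pos_of_mul_pos_left ((Nat.cast_nonneg p).trans_lt hNε) hε.le
  have hcol (j : Fin q) : ∃ n : Fin p → ℕ, (∀ i, Odd (n i)) ∧ ∑ i, n i = N ∧
      ∀ i, |(n i : ℝ) - N * M i j| ≤ p - 1 := by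
    simpa using exists_odd_round_of_sq_card_le (x := fun i => N * M i j)
      (fun i => mul_nonneg hN.le (hM0 i j)) (by simp [← mul_sum, hM1 j])
      (by simpa using hpar) (by simpa using hpN)
  choose n hodd hsum hclose using hcol
  refine ⟨fun i j => n j i / N, fun i j => div_pos (by exact_mod_cast (hodd j i).pos) hN,
    fun j => ?_, fun i j => ?_, N, hN, fun i j => ?_⟩
  · rw [← sum_div, div_eq_one_iff_eq hN.ne']
    exact_mod_cast hsum j
  · calc |(n j i : ℝ) / N - M i j| = |(n j i : ℝ) - N * M i j| / N := by
          rw [← abs_of_pos hN, ← abs_div, abs_of_pos hN, sub_div, mul_div_cancel_left₀ _ hN.ne']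
      _ ≤ (p - 1) / N := by gcongr; exact hclose j i
      _ < ε := by rw [div_lt_iff₀ hN]; linarith
  · obtain ⟨m, hm⟩ := hodd j i
    exact ⟨m, by rw [mul_div_cancel₀ _ hN.ne']; exact_mod_cast hm⟩
end

section
/- Consider the inverse system of cones ℝ₊ ← ℝ₊² ← ℝ₊³ ← ⋯ where the map πₙ : ℝ₊^{n+1} → ℝ₊^n is given by the n×(n+1) matrix with (πₙ)_{ij} = 1 if i = j, 2 if i > j, and 0 if i < j (so the last column is zero). Then the inverse limit of this system is the zero cone: the only compatible sequence is the all-zero sequence. -/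
/-- Auxiliary: `x` reindexed by natural numbers, with junk value `0` out of range. -/
def stmt13.yv (x : ∀ n : ℕ, Fin (n + 1) → ℝ) (n i : ℕ) : ℝ :=
  if h : i < n + 1 then x n ⟨i, h⟩ else 0

/-- The inverse limit of the system `ℝ₊ ← ℝ₊² ← ℝ₊³ ← ⋯`, with bonding maps given by the
`n × (n+1)` matrices having `1`'s on the diagonal, `2`'s below the diagonal and `0`'s above
(so the last column is zero), is the zero cone: every compatible nonnegative sequence is
identically zero. -/
theorem stmt13 (x : ∀ n : ℕ, Fin (n + 1) → ℝ)
    (hpos : ∀ n i, 0 ≤ x n i)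
    (hcompat : ∀ (n : ℕ) (i : Fin (n + 1)),
      x n i = x (n + 1) i.castSucc +
        2 * ∑ j : Fin (n + 2), if (j : ℕ) < (i : ℕ) then x (n + 1) j else 0) :
    ∀ n i, x n i = 0 := by
  set y := stmt13.yv x with hy
  have hyx : ∀ (n : ℕ) (i : Fin (n + 1)), y n (i : ℕ) = x n i := by
    intro n i
    simp [hy, stmt13.yv, i.isLt, Fin.eta]
  have h0 : ∀ n i, 0 ≤ y n i := by
    intro n i
    by_cases h : i < n + 1
    · simp [hy, stmt13.yv, h]; exact hpos n _
    · simp [hy, stmt13.yv, h]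
  have hkey : ∀ n i, i ≤ n → y n i = y (n + 1) i +
      2 * ∑ j : Fin (n + 2), (if (j : ℕ) < i then y (n + 1) (j : ℕ) else 0) := by
    intro n i h
    have hlt : i < n + 1 := Nat.lt_succ_of_le h
    have := hcompat n ⟨i, hlt⟩
    have e1 : y n i = x n ⟨i, hlt⟩ := hyx n ⟨i, hlt⟩
    have e2 : y (n + 1) i = x (n + 1) (Fin.castSucc ⟨i, hlt⟩) := by
      have := hyx (n + 1) (Fin.castSucc ⟨i, hlt⟩)
      simpa using this
    rw [e1, e2, this]
    congr 2
    apply Finset.sum_congr rfl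
    intro j _
    rw [hyx (n + 1) j]
  have main : ∀ i n, i ≤ n → y n i = 0 := by
    intro i
    induction i using Nat.strong_induction_on with
    | _ i IH =>
      have hsum : ∀ n, i ≤ n →
          (∑ j : Fin (n + 2), (if (j : ℕ) < i then y (n + 1) (j : ℕ) else 0)) = 0 := by
        intro n hn
        apply Finset.sum_eq_zero
        intro j _
        by_cases hj : (j : ℕ) < i
        · simp only [hj, if_true]
          exact IH j hj (n + 1) (by omega)
        · simp [hj]
      have hstep : ∀ n, i ≤ n → y n i = y (n + 1) i := by
        intro n hn
        rw [hkey n i hn, hsum n hn]; ring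
      have hconst : ∀ n, i ≤ n → y n i = y i i := by
        intro n hn
        induction n, hn using Nat.le_induction with
        | base => rfl
        | succ n hn ih => rw [← hstep n hn, ih]
      have hgrow : ∀ n, i + 1 ≤ n → y (n + 1) (i + 1) + 2 * y i i ≤ y n (i + 1) := by
        intro n hn
        rw [hkey n (i + 1) hn]
        have hS : y i i ≤
            ∑ j : Fin (n + 2), (if (j : ℕ) < i + 1 then y (n + 1) (j : ℕ) else 0) := by
          have hmem : (⟨i, by omega⟩ : Fin (n + 2)) ∈ Finset.univ := Finset.mem_univ _
          have hle := Finset.single_le_sum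
            (f := fun j : Fin (n + 2) => if (j : ℕ) < i + 1 then y (n + 1) (j : ℕ) else 0)
            (fun j _ => by by_cases hj : (j : ℕ) < i + 1 <;> simp [hj, h0]) hmem
          simp only [Nat.lt_succ_self, if_true] at hle
          calc y i i = y (n + 1) i := (hconst (n + 1) (by omega)).symm
            _ ≤ _ := hle
        linarith
      have hchain : ∀ k : ℕ, y (i + 1 + k) (i + 1) + 2 * k * y i i ≤ y (i + 1) (i + 1) := by
        intro k
        induction k with
        | zero => simp
        | succ k ih =>
          have h1 := hgrow (i + 1 + k) (by omega)
          have h2 : y (i + 1 + (k + 1)) (i + 1) = y (i + 1 + k + 1) (i + 1) := by ring_nf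
          rw [h2]
          push_cast
          push_cast at ih
          linarith
      have hc0 : y i i = 0 := by
        by_contra hne
        have hc : 0 < y i i := lt_of_le_of_ne (h0 i i) (Ne.symm hne)
        obtain ⟨k, hk⟩ := exists_nat_gt (y (i + 1) (i + 1) / (2 * y i i))
        have hk2 : y (i + 1) (i + 1) < k * (2 * y i i) := by
          rw [div_lt_iff₀ (by linarith)] at hk
          linarith
        have := hchain k
        have hnn := h0 (i + 1 + k) (i + 1)
        nlinarith
      intro n hn
      rw [hconst n hn, hc0]
  intro n i
  rw [← hyx n i]
  exact main i n (by omega)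
end

section
/- Let C ⊆ ℓ¹ be the set of sequences (x, y₁, y₂, …) with yᵢ ≥ 0 for all i and x ≥ Σᵢ yᵢ, and let B = {(1, y₁, y₂, …) ∈ C}. Then B is convex, and its extreme points are exactly e = (1,0,0,…) and eᵢ = (1,0,…,0,1,0,…) (with the 1 in position i+1), for i ≥ 1. -/
/-- The base `B = {(1, y₁, y₂, …) : yᵢ ≥ 0, Σᵢ yᵢ ≤ 1}` of the cone
`C = {(x, y) : yᵢ ≥ 0, Σᵢ yᵢ ≤ x} ⊆ ℓ¹`. -/
def B16 : Set (ℝ × (ℕ → ℝ)) :=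
  {p | p.1 = 1 ∧ (∀ i, 0 ≤ p.2 i) ∧ ∀ s : Finset ℕ, ∑ i ∈ s, p.2 i ≤ p.1}

/-!
Every point of `B16` has coordinates `yᵢ ∈ [0, 1]`. If some `t = yᵢ` lies strictly between `0` and
`1`, the point is the proper convex combination `t • eᵢ + (1 - t) • q`, where `q` is the rest of
the sequence rescaled by `(1 - t)⁻¹`; so the coordinates of an extreme point are all `0` or `1`,
and since they sum to at most `1`, it is `e` or some `eᵢ`. Conversely, `0` and `1` are extreme in
`[0, 1]`, so a coordinate equal to `0` or `1` is shared by both ends of any open segment through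
the point, and this pins down both ends at `e` and at `eᵢ`.
-/

open Set

namespace B16

theorem convex : Convex ℝ B16 := by
  rintro p ⟨hp1, hp0, hps⟩ q ⟨hq1, hq0, hqs⟩ a b ha hb hab
  refine ⟨by simp [hp1, hq1, hab], fun i => ?_, fun s => ?_⟩
  · simp only [Prod.snd_add, Prod.smul_snd, Pi.add_apply, Pi.smul_apply, smul_eq_mul]
    exact add_nonneg (mul_nonneg ha (hp0 i)) (mul_nonneg hb (hq0 i))
  · simp only [Prod.snd_add, Prod.smul_snd, Prod.fst_add, Prod.smul_fst, Pi.add_apply,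
      Pi.smul_apply, smul_eq_mul, Finset.sum_add_distrib, ← Finset.mul_sum]
    gcongr
    exacts [hps s, hqs s]

theorem snd_mem_Icc {p : ℝ × (ℕ → ℝ)} (hp : p ∈ B16) (i : ℕ) : p.2 i ∈ Icc 0 1 :=
  ⟨hp.2.1 i, by simpa [hp.1] using hp.2.2 {i}⟩

theorem one_single_mem (i : ℕ) : ((1 : ℝ), Pi.single i (1 : ℝ)) ∈ B16 := by
  refine ⟨rfl, fun j => ?_, fun s => ?_⟩
  · by_cases hj : j = i <;> simp [hj]
  · rw [Finset.sum_pi_single']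
    split_ifs <;> norm_num

theorem one_zero_mem : ((1 : ℝ), (0 : ℕ → ℝ)) ∈ B16 :=
  ⟨rfl, fun _ => le_rfl, fun s => by simp⟩

theorem eq_one_single_of_snd_eq_one {p : ℝ × (ℕ → ℝ)} (hp : p ∈ B16) {i : ℕ} (hi : p.2 i = 1) :
    p = (1, Pi.single i 1) := by
  refine Prod.ext hp.1 (funext fun j => ?_)
  rcases eq_or_ne j i with rfl | hj
  · simpa using hi
  · have hij : p.2 i + p.2 j ≤ 1 := by
      simpa [Finset.sum_pair hj.symm, hp.1] using hp.2.2 {i, j}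
    have hj0 : p.2 j = 0 := le_antisymm (by linarith) (hp.2.1 j)
    simp [hj0, hj]

theorem sum_update_zero_le {p : ℝ × (ℕ → ℝ)} (hp : p ∈ B16) (i : ℕ) (s : Finset ℕ) :
    ∑ j ∈ s, Function.update p.2 i 0 j ≤ 1 - p.2 i := by
  have herase : ∑ j ∈ s, Function.update p.2 i 0 j = ∑ j ∈ s.erase i, p.2 j := by
    rw [← Finset.sum_erase s (Function.update_self i 0 p.2)]
    exact Finset.sum_congr rfl fun j hj => Function.update_of_ne (Finset.ne_of_mem_erase hj) _ _
  have hinsert : p.2 i + ∑ j ∈ s.erase i, p.2 j ≤ 1 := by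
    simpa [Finset.sum_insert (Finset.notMem_erase i s), hp.1] using hp.2.2 (insert i (s.erase i))
  linarith

theorem snd_eq_zero_or_one_of_mem_extremePoints {p : ℝ × (ℕ → ℝ)}
    (hp : p ∈ extremePoints ℝ B16) (i : ℕ) : p.2 i = 0 ∨ p.2 i = 1 := by
  obtain ⟨hpB, hext⟩ := mem_extremePoints.1 hp
  by_contra! h
  set t := p.2 i with ht
  have ht0 : 0 < t := (hpB.2.1 i).lt_of_ne' h.1
  have ht1 : 0 < 1 - t := sub_pos.2 ((snd_mem_Icc hpB i).2.lt_of_ne h.2)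
  set q : ℝ × (ℕ → ℝ) := (1, (1 - t)⁻¹ • Function.update p.2 i 0)
  have hq : q ∈ B16 := by
    refine ⟨rfl, fun j => ?_, fun s => ?_⟩
    · rcases eq_or_ne j i with rfl | hj
      · simp [q]
      · simpa [q, Function.update_of_ne hj] using mul_nonneg (inv_pos.2 ht1).le (hpB.2.1 j)
    · simpa [q, ← Finset.mul_sum, inv_mul_le_iff₀ ht1] using sum_update_zero_le hpB i s
  have hseg : p ∈ openSegment ℝ (1, Pi.single i 1) q := by
    refine ⟨t, 1 - t, ht0, ht1, by ring, Prod.ext (by simp [q, hpB.1]) (funext fun j => ?_)⟩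
    rcases eq_or_ne j i with rfl | hj
    · simp [q, ht]
    · simp [q, hj, ht1.ne']
  have := congrArg (fun x => x.2 i) (hext _ (one_single_mem i) _ hq hseg).1
  exact h.2 (by simpa using this.symm)

theorem snd_eq_of_mem_openSegment {p x y : ℝ × (ℕ → ℝ)} (hx : x ∈ B16) (hy : y ∈ B16)
    (hp : p ∈ openSegment ℝ x y) {j : ℕ} (hj : p.2 j = 0 ∨ p.2 j = 1) :
    x.2 j = p.2 j ∧ y.2 j = p.2 j := by
  have hpj : p.2 j ∈ extremePoints ℝ (Icc (0 : ℝ) 1) := by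
    rw [extremePoints_Icc zero_le_one]
    exact hj
  obtain ⟨a, b, ha, hb, hab, rfl⟩ := hp
  exact (mem_extremePoints.1 hpj).2 _ (snd_mem_Icc hx j) _ (snd_mem_Icc hy j) ⟨a, b, ha, hb, hab, rfl⟩

theorem one_zero_mem_extremePoints : ((1 : ℝ), (0 : ℕ → ℝ)) ∈ extremePoints ℝ B16 := by
  refine mem_extremePoints.2 ⟨one_zero_mem, fun x hx y hy hp => ?_⟩
  have hcoord j := snd_eq_of_mem_openSegment hx hy hp (j := j) (Or.inl rfl)
  exact ⟨Prod.ext hx.1 (funext fun j => (hcoord j).1), Prod.ext hy.1 (funext fun j => (hcoord j).2)⟩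

theorem one_single_mem_extremePoints (i : ℕ) :
    ((1 : ℝ), Pi.single i (1 : ℝ)) ∈ extremePoints ℝ B16 := by
  refine mem_extremePoints.2 ⟨one_single_mem i, fun x hx y hy hp => ?_⟩
  obtain ⟨hxi, hyi⟩ := snd_eq_of_mem_openSegment hx hy hp (j := i) (Or.inr (by simp))
  simp only [Pi.single_eq_same] at hxi hyi
  exact ⟨eq_one_single_of_snd_eq_one hx hxi, eq_one_single_of_snd_eq_one hy hyi⟩

end B16

/-- `B16` is convex and its extreme points are exactly `e = (1, 0, 0, …)` and
`eᵢ = (1, 0, …, 0, 1, 0, …)`. -/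
theorem stmt16 :
    Convex ℝ B16 ∧
    Set.extremePoints ℝ B16 =
      insert ((1 : ℝ), (0 : ℕ → ℝ))
        {p : ℝ × (ℕ → ℝ) | ∃ i : ℕ, p = ((1 : ℝ), Pi.single i (1 : ℝ))} := by
  refine ⟨B16.convex, Set.ext fun p => ⟨fun hp => ?_, ?_⟩⟩
  · have hpB : p ∈ B16 := hp.1
    by_cases hone : ∃ i, p.2 i = 1
    · obtain ⟨i, hi⟩ := hone
      exact Or.inr ⟨i, B16.eq_one_single_of_snd_eq_one hpB hi⟩
    · push Not at hone
      refine Or.inl (Prod.ext hpB.1 (funext fun j => ?_))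
      exact (B16.snd_eq_zero_or_one_of_mem_extremePoints hp j).resolve_right (hone j)
  · rintro (rfl | ⟨i, rfl⟩)
    exacts [B16.one_zero_mem_extremePoints, B16.one_single_mem_extremePoints i]
end

section
/- Let C ⊆ ℓ¹ consist of sequences (x₁, x₂, y₁, y₂, …) with yᵢ ≥ 0 for all i, x₁ ≥ Σᵢ yᵢ, and x₂ ≥ Σᵢ yᵢ, and let B = {v ∈ C : x₁ + x₂ = 1}. Then B is convex, its extreme points are f₁ = (1,0,0,…), f₂ = (0,1,0,…), and eᵢ = (1/2, 1/2, 0,…,0, 1/2, 0,…) (with 1/2 in position i+2), and in the weak-* topology from c₀ the set of extreme points of B is not closed: eᵢ → (1/2)f₁ + (1/2)f₂, which is not an extreme point. -/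
/-- The base `B = {(x₁, x₂, y) : yᵢ ≥ 0, Σyᵢ ≤ x₁, Σyᵢ ≤ x₂, x₁ + x₂ = 1}` of the cone
`C ⊆ ℓ¹`. -/
def B17 : Set (ℝ × ℝ × (ℕ → ℝ)) :=
  {p | (∀ i, 0 ≤ p.2.2 i) ∧ (∀ s : Finset ℕ, ∑ i ∈ s, p.2.2 i ≤ p.1) ∧
    (∀ s : Finset ℕ, ∑ i ∈ s, p.2.2 i ≤ p.2.1) ∧ p.1 + p.2.1 = 1}

/-!
`B17` is the base `{x₁ + x₂ = 1}` of the convex cone `C17` (the cone `C`). If `p` is extreme in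
the base, `u` lies in the base, `0 < t < 1` and `p - t • u` is still in the cone, then `p` is the
proper convex combination `t • u + (1 - t) • q` with `q = (1 - t)⁻¹ • (p - t • u)` in the base,
so `u = p`. When `yᵢ > 0`, taking `u = eᵢ` and `t = yᵢ` (removing `yᵢ / 2` from `x₁`, `x₂` and
`yᵢ` stays in `C`) gives `p = eᵢ`; when `y = 0`, `p` lies on the segment `[f₁, f₂]`. Conversely
`f₁`, `f₂`, `eᵢ` are exposed by the functionals `-x₂`, `-x₁` and `yᵢ`. Finally `eᵢ` tends
coordinatewise to the midpoint of `f₁` and `f₂`, which is not extreme.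
-/

open Filter Topology Set

namespace ConvexCone

variable {E : Type*} [AddCommGroup E] [Module ℝ E] (K : ConvexCone ℝ E) (f : E →ₗ[ℝ] ℝ)

def base : Set E := {x | x ∈ K ∧ f x = 1}

theorem convex_base : Convex ℝ (K.base f) :=
  K.convex.inter (convex_hyperplane f.isLinear 1)

variable {K f}

theorem eq_of_mem_extremePoints_base {p u : E} {t : ℝ} (hp : p ∈ extremePoints ℝ (K.base f))
    (hu : u ∈ K.base f) (ht0 : 0 < t) (ht1 : t < 1) (hpu : p - t • u ∈ K) : u = p := by
  have hfp : f p = 1 := hp.1.2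
  have ht1' : 0 < 1 - t := sub_pos.2 ht1
  set q := (1 - t)⁻¹ • (p - t • u)
  have hq : q ∈ K.base f := by
    refine ⟨K.smul_mem (inv_pos.2 ht1') hpu, ?_⟩
    simp only [q, map_smul, map_sub, hfp, hu.2, smul_eq_mul, mul_one]
    exact inv_mul_cancel₀ ht1'.ne'
  have hseg : p ∈ openSegment ℝ u q := by
    refine ⟨t, 1 - t, ht0, ht1', by ring, ?_⟩
    simp only [q, smul_smul, mul_inv_cancel₀ ht1'.ne', one_smul, add_sub_cancel]
  exact ((mem_extremePoints.1 hp).2 u hu q hq hseg).1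

end ConvexCone

theorem tendsto_pi_single_cofinite_nhds_zero {ι M : Type*} [DecidableEq ι] [TopologicalSpace M]
    [Zero M] (x : M) : Tendsto (fun i => (Pi.single i x : ι → M)) cofinite (𝓝 0) :=
  tendsto_pi_nhds.2 fun j => tendsto_const_nhds.congr'
    ((eventually_cofinite_ne j).mono fun _ hi => by simp [Pi.single_eq_of_ne' hi])

def C17 : ConvexCone ℝ (ℝ × ℝ × (ℕ → ℝ)) where
  carrier := {p | (∀ i, 0 ≤ p.2.2 i) ∧ (∀ s : Finset ℕ, ∑ i ∈ s, p.2.2 i ≤ p.1) ∧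
    (∀ s : Finset ℕ, ∑ i ∈ s, p.2.2 i ≤ p.2.1)}
  smul_mem' := by
    rintro c hc p ⟨hy, h1, h2⟩
    refine ⟨fun i => mul_nonneg hc.le (hy i), fun s => ?_, fun s => ?_⟩ <;>
      simp only [Prod.smul_fst, Prod.smul_snd, Pi.smul_apply, smul_eq_mul, ← Finset.mul_sum]
    exacts [mul_le_mul_of_nonneg_left (h1 s) hc.le, mul_le_mul_of_nonneg_left (h2 s) hc.le]
  add_mem' := by
    rintro p ⟨hy, h1, h2⟩ q ⟨hy', h1', h2'⟩
    refine ⟨fun i => add_nonneg (hy i) (hy' i), fun s => ?_, fun s => ?_⟩ <;>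
      simp only [Prod.fst_add, Prod.snd_add, Pi.add_apply, Finset.sum_add_distrib]
    exacts [add_le_add (h1 s) (h1' s), add_le_add (h2 s) (h2' s)]

def fstAddSnd : ℝ × ℝ × (ℕ → ℝ) →ₗ[ℝ] ℝ :=
  LinearMap.fst ℝ ℝ _ + (LinearMap.fst ℝ ℝ _).comp (LinearMap.snd ℝ ℝ _)

theorem B17_eq : B17 = C17.base fstAddSnd := by
  ext p
  exact ⟨fun ⟨hy, h1, h2, hm⟩ => ⟨⟨hy, h1, h2⟩, hm⟩, fun ⟨⟨hy, h1, h2⟩, hm⟩ => ⟨hy, h1, h2, hm⟩⟩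

theorem sub_single_mem_C17 {a b s : ℝ} {y : ℕ → ℝ} {i : ℕ} (hp : (a, b, y) ∈ C17)
    (hs : s ≤ y i) : (a - s, b - s, y - Pi.single i s) ∈ C17 := by
  obtain ⟨hy, h1, h2⟩ := hp
  have hsum_le : ∀ c, (∀ t : Finset ℕ, ∑ j ∈ t, y j ≤ c) →
      ∀ t : Finset ℕ, ∑ j ∈ t, (y - Pi.single i s : ℕ → ℝ) j ≤ c - s := by
    intro c hc t
    simp only [Pi.sub_apply, Finset.sum_sub_distrib, Finset.sum_pi_single']
    split_ifs with hit
    · linarith [hc t]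
    · have := hc (insert i t)
      rw [Finset.sum_insert hit] at this
      linarith
  refine ⟨fun j => ?_, hsum_le a h1, hsum_le b h2⟩
  rcases eq_or_ne j i with rfl | hji
  · simpa using hs
  · simpa [Pi.single_eq_of_ne hji] using hy j

section B17

variable {p : ℝ × ℝ × (ℕ → ℝ)}

theorem coord_le_fst_of_mem_B17 (hp : p ∈ B17) (i : ℕ) : p.2.2 i ≤ p.1 := by
  simpa using hp.2.1 {i}

theorem coord_le_snd_of_mem_B17 (hp : p ∈ B17) (i : ℕ) : p.2.2 i ≤ p.2.1 := by
  simpa using hp.2.2.1 {i}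

theorem fst_nonneg_of_mem_B17 (hp : p ∈ B17) : 0 ≤ p.1 := by
  simpa using hp.2.1 ∅

theorem snd_nonneg_of_mem_B17 (hp : p ∈ B17) : 0 ≤ p.2.1 := by
  simpa using hp.2.2.1 ∅

theorem coord_add_coord_le_fst_of_mem_B17 (hp : p ∈ B17) {i j : ℕ} (hij : i ≠ j) :
    p.2.2 i + p.2.2 j ≤ p.1 := by
  simpa [Finset.sum_pair hij] using hp.2.1 {i, j}

end B17

theorem f1_mem_B17 : ((1 : ℝ), (0 : ℝ), (0 : ℕ → ℝ)) ∈ B17 := by simp [B17]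

theorem f2_mem_B17 : ((0 : ℝ), (1 : ℝ), (0 : ℕ → ℝ)) ∈ B17 := by simp [B17]

theorem e_mem_B17 (i : ℕ) : ((1 / 2 : ℝ), (1 / 2 : ℝ), Pi.single i (1 / 2 : ℝ)) ∈ B17 := by
  refine ⟨fun j => ?_, fun s => ?_, fun s => ?_, by norm_num⟩
  · simp only [Pi.single_apply]; split_ifs <;> norm_num
  all_goals simp only [Finset.sum_pi_single']; split_ifs <;> norm_num

theorem f1_mem_exposedPoints_B17 : ((1 : ℝ), (0 : ℝ), (0 : ℕ → ℝ)) ∈ exposedPoints ℝ B17 := by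
  refine ⟨f1_mem_B17,
    -(ContinuousLinearMap.fst ℝ ℝ (ℕ → ℝ)).comp (ContinuousLinearMap.snd ℝ ℝ (ℝ × (ℕ → ℝ))),
    fun q hq => ⟨?_, fun h => ?_⟩⟩
  · simpa using snd_nonneg_of_mem_B17 hq
  · have hb : q.2.1 = 0 := le_antisymm (by simpa using h) (snd_nonneg_of_mem_B17 hq)
    refine Prod.ext (by linarith [hq.2.2.2]) (Prod.ext hb (funext fun j => ?_))
    exact le_antisymm (by simpa [hb] using coord_le_snd_of_mem_B17 hq j) (hq.1 j)

theorem f2_mem_exposedPoints_B17 : ((0 : ℝ), (1 : ℝ), (0 : ℕ → ℝ)) ∈ exposedPoints ℝ B17 := by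
  refine ⟨f2_mem_B17, -ContinuousLinearMap.fst ℝ ℝ (ℝ × (ℕ → ℝ)), fun q hq => ⟨?_, fun h => ?_⟩⟩
  · simpa using fst_nonneg_of_mem_B17 hq
  · have ha : q.1 = 0 := le_antisymm (by simpa using h) (fst_nonneg_of_mem_B17 hq)
    refine Prod.ext ha (Prod.ext (by linarith [hq.2.2.2]) (funext fun j => ?_))
    exact le_antisymm (by simpa [ha] using coord_le_fst_of_mem_B17 hq j) (hq.1 j)

theorem e_mem_exposedPoints_B17 (i : ℕ) :
    ((1 / 2 : ℝ), (1 / 2 : ℝ), Pi.single i (1 / 2 : ℝ)) ∈ exposedPoints ℝ B17 := by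
  refine ⟨e_mem_B17 i, (ContinuousLinearMap.proj i).comp
    ((ContinuousLinearMap.snd ℝ ℝ (ℕ → ℝ)).comp (ContinuousLinearMap.snd ℝ ℝ (ℝ × (ℕ → ℝ)))),
    fun q hq => ?_⟩
  have hqa := coord_le_fst_of_mem_B17 hq i
  have hqb := coord_le_snd_of_mem_B17 hq i
  have hsum : q.1 + q.2.1 = 1 := hq.2.2.2
  refine ⟨?_, fun h => ?_⟩
  · change q.2.2 i ≤ (Pi.single i (1 / 2 : ℝ) : ℕ → ℝ) i
    rw [Pi.single_eq_same]
    linarith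
  · change (Pi.single i (1 / 2 : ℝ) : ℕ → ℝ) i ≤ q.2.2 i at h
    rw [Pi.single_eq_same] at h
    refine Prod.ext (by dsimp only; linarith) (Prod.ext (by dsimp only; linarith) ?_)
    funext j
    dsimp only
    rcases eq_or_ne j i with rfl | hji
    · rw [Pi.single_eq_same]
      linarith
    · rw [Pi.single_eq_of_ne hji]
      linarith [coord_add_coord_le_fst_of_mem_B17 hq hji, hq.1 j]

theorem extremePoints_B17_subset :
    extremePoints ℝ B17 ⊆
      insert ((1 : ℝ), (0 : ℝ), (0 : ℕ → ℝ))
        (insert ((0 : ℝ), (1 : ℝ), (0 : ℕ → ℝ))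
          {p : ℝ × ℝ × (ℕ → ℝ) |
            ∃ i : ℕ, p = ((1 / 2 : ℝ), (1 / 2 : ℝ), Pi.single i (1 / 2 : ℝ))}) := by
  rintro ⟨a, b, y⟩ hp
  have hB : (a, b, y) ∈ B17 := hp.1
  rw [B17_eq] at hp
  have hC : (a, b, y) ∈ C17 := hp.1.1
  by_cases hy : ∃ i, y i ≠ 0
  · obtain ⟨i, hi⟩ := hy
    have hyi : 0 < y i := (hB.1 i).lt_of_ne' hi
    have hyi_lt : y i < 1 := by
      linarith [coord_le_fst_of_mem_B17 hB i, coord_le_snd_of_mem_B17 hB i, hB.2.2.2]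
    have hsub : (a, b, y) - y i • ((1 / 2 : ℝ), (1 / 2 : ℝ), Pi.single i (1 / 2 : ℝ)) ∈ C17 := by
      convert sub_single_mem_C17 hC (half_le_self hyi.le) using 1
      ext <;> simp [Pi.single_apply, div_eq_mul_inv]
    exact Or.inr (Or.inr ⟨i, (ConvexCone.eq_of_mem_extremePoints_base hp
      (B17_eq ▸ e_mem_B17 i) hyi hyi_lt hsub).symm⟩)
  · push Not at hy
    obtain rfl : y = 0 := funext hy
    rcases (fst_nonneg_of_mem_B17 hB).eq_or_lt with rfl | ha
    · exact Or.inr (Or.inl (by simpa using hB.2.2.2))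
    rcases (snd_nonneg_of_mem_B17 hB).eq_or_lt with rfl | hb
    · exact Or.inl (by simpa using hB.2.2.2)
    have hC' : ((0 : ℝ), b, (0 : ℕ → ℝ)) ∈ C17 := ⟨fun _ => le_rfl, by simp, by simp [hb.le]⟩
    have hsub : (a, b, (0 : ℕ → ℝ)) - a • ((1 : ℝ), (0 : ℝ), (0 : ℕ → ℝ)) ∈ C17 := by
      convert hC' using 1
      ext <;> simp
    exact Or.inl (ConvexCone.eq_of_mem_extremePoints_base hp (B17_eq ▸ f1_mem_B17) ha
      (by linarith [hB.2.2.2]) hsub).symm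

/-- `B17` is convex, its extreme points are `f₁`, `f₂` and the `eᵢ`, and the set of extreme
points is not closed: `eᵢ → (1/2)f₁ + (1/2)f₂`, which is not extreme. -/
theorem stmt17 :
    Convex ℝ B17 ∧
    Set.extremePoints ℝ B17 =
      insert ((1 : ℝ), (0 : ℝ), (0 : ℕ → ℝ))
        (insert ((0 : ℝ), (1 : ℝ), (0 : ℕ → ℝ))
          {p : ℝ × ℝ × (ℕ → ℝ) |
            ∃ i : ℕ, p = ((1 / 2 : ℝ), (1 / 2 : ℝ), Pi.single i (1 / 2 : ℝ))}) ∧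
    Filter.Tendsto
      (fun i : ℕ => (((1 / 2 : ℝ), (1 / 2 : ℝ), Pi.single i (1 / 2 : ℝ)) : ℝ × ℝ × (ℕ → ℝ)))
      Filter.atTop (nhds ((1 / 2 : ℝ), (1 / 2 : ℝ), (0 : ℕ → ℝ))) ∧
    ((1 / 2 : ℝ), (1 / 2 : ℝ), (0 : ℕ → ℝ)) ∉ Set.extremePoints ℝ B17 ∧
    ¬ IsClosed (Set.extremePoints ℝ B17) := by
  have he (i : ℕ) := exposedPoints_subset_extremePoints (e_mem_exposedPoints_B17 i)
  have hext := extremePoints_B17_subset.antisymm <| by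
    rintro _ (rfl | rfl | ⟨i, rfl⟩)
    exacts [exposedPoints_subset_extremePoints f1_mem_exposedPoints_B17,
      exposedPoints_subset_extremePoints f2_mem_exposedPoints_B17, he i]
  have htend : Tendsto
      (fun i : ℕ => (((1 / 2 : ℝ), (1 / 2 : ℝ), Pi.single i (1 / 2 : ℝ)) : ℝ × ℝ × (ℕ → ℝ)))
      atTop (𝓝 ((1 / 2 : ℝ), (1 / 2 : ℝ), (0 : ℕ → ℝ))) :=
    tendsto_const_nhds.prodMk_nhds <| tendsto_const_nhds.prodMk_nhds <|
      Nat.cofinite_eq_atTop ▸ tendsto_pi_single_cofinite_nhds_zero _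
  have hmid : ((1 / 2 : ℝ), (1 / 2 : ℝ), (0 : ℕ → ℝ)) ∉ extremePoints ℝ B17 := fun h => by
    have hseg : ((1 / 2 : ℝ), (1 / 2 : ℝ), (0 : ℕ → ℝ)) ∈
        openSegment ℝ ((1 : ℝ), (0 : ℝ), (0 : ℕ → ℝ)) ((0 : ℝ), (1 : ℝ), (0 : ℕ → ℝ)) :=
      ⟨1 / 2, 1 / 2, by norm_num, by norm_num, by norm_num, by ext <;> simp⟩
    have := congrArg Prod.fst ((mem_extremePoints.1 h).2 _ f1_mem_B17 _ f2_mem_B17 hseg).1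
    norm_num at this
  exact ⟨B17_eq ▸ C17.convex_base fstAddSnd, hext, htend, hmid,
    fun hcl => hmid (hcl.mem_of_tendsto htend (.of_forall he))⟩
end
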